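/- Let γ_0 < γ_1 < ⋯ < γ_{r−1} (r ≥ 2) be positive integers satisfying Bresinsky's conditions, let N > 1 be an integer, and let γ_r be a positive integer with gcd(N, γ_r) = 1 and gcd(γ_0, …, γ_{r−2})·N·γ_{r−1} < γ_r. Then the sequence N·γ_0 < N·γ_1 < ⋯ < N·γ_{r−1} < γ_r satisfies Bresinsky's conditions. -/
import Mathlib


/-- Positive integers `γ_0 < γ_1 < ⋯ < γ_r` satisfy Bresinsky's conditions if
(1) `gcd(γ_0, …, γ_r) = 1`; (2) `gcd(γ_0, …, γ_i) < gcd(γ_0, …, γ_{i−1})` for all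
`1 ≤ i ≤ r`; and (3) `(gcd(γ_0, …, γ_{i−1})/gcd(γ_0, …, γ_i))·γ_i < γ_{i+1}` for all
`1 ≤ i ≤ r−1`. -/
def IsBresinsky (γ : ℕ → ℕ) (r : ℕ) : Prop :=
  (∀ k, k ≤ r → 0 < γ k) ∧ (∀ k, k < r → γ k < γ (k + 1)) ∧
  (Finset.range (r + 1)).gcd γ = 1 ∧
  (∀ i, 1 ≤ i → i ≤ r →
    (Finset.range (i + 1)).gcd γ < (Finset.range i).gcd γ) ∧
  (∀ i, 1 ≤ i → i + 1 ≤ r →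
    ((Finset.range i).gcd γ / (Finset.range (i + 1)).gcd γ) * γ i < γ (i + 1))

/-- Let `γ_0 < γ_1 < ⋯ < γ_{r−1}` (`r ≥ 2`) be positive integers
satisfying Bresinsky's conditions, let `N > 1` be an integer, and let `γ_r = c` be a
positive integer with `gcd(N, c) = 1` and `gcd(γ_0, …, γ_{r−2})·N·γ_{r−1} < c`. Then the
sequence `N·γ_0 < N·γ_1 < ⋯ < N·γ_{r−1} < c` satisfies Bresinsky's conditions. -/
theorem bresinsky_extension
    (r : ℕ) (hr : 2 ≤ r) (γ : ℕ → ℕ) (hB : IsBresinsky γ (r - 1))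
    (N : ℕ) (hN : 1 < N) (c : ℕ) (hc : 0 < c)
    (hcop : Nat.Coprime N c)
    (hlt : (Finset.range (r - 1)).gcd γ * (N * γ (r - 1)) < c) :
    IsBresinsky (fun i => if i ≤ r - 1 then N * γ i else c) r := by
  obtain ⟨m, rfl⟩ : ∃ m, r = m + 1 := ⟨r - 1, (Nat.succ_pred_eq_of_pos (by omega)).symm⟩
  have hm : 1 ≤ m := by omega
  simp only [Nat.add_sub_cancel] at *
  obtain ⟨hpos, hmono, hgcd1, hdec, hrat⟩ := hB
  set δ : ℕ → ℕ := fun i => if i ≤ m then N * γ i else c with hδ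
  -- key gcd lemma
  have key : ∀ i, i ≤ m + 1 → (Finset.range i).gcd δ = N * (Finset.range i).gcd γ := by
    intro i hi
    have h1 : (Finset.range i).gcd δ = (Finset.range i).gcd (fun k => N * γ k) := by
      apply Finset.gcd_congr rfl
      intro k hk
      simp only [Finset.mem_range] at hk
      simp only [hδ, if_pos (by omega : k ≤ m)]
    rw [h1, Finset.gcd_mul_left]
    simp
  have hgpos : ∀ i, 1 ≤ i → i ≤ m + 1 → 0 < (Finset.range i).gcd γ := by
    intro i h1 h2
    rcases Nat.eq_zero_or_pos ((Finset.range i).gcd γ) with h | h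
    · rw [Finset.gcd_eq_zero_iff] at h
      have := h 0 (Finset.mem_range.mpr (by omega))
      have := hpos 0 (Nat.zero_le _)
      omega
    · exact h
  have htop : (Finset.range (m + 1 + 1)).gcd δ = 1 := by
    rw [Finset.range_add_one, Finset.gcd_insert, key (m+1) le_rfl, hgcd1]
    simp only [hδ, if_neg (by omega : ¬ m + 1 ≤ m), mul_one]
    exact hcop.symm
  refine ⟨?_, ?_, htop, ?_, ?_⟩
  · intro k hk
    by_cases h : k ≤ m
    · simp only [hδ, if_pos h]
      exact Nat.mul_pos (by omega) (hpos k h)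
    · simp only [hδ, if_neg h]; exact hc
  · intro k hk
    by_cases h : k + 1 ≤ m
    · simp only [hδ, if_pos h, if_pos (by omega : k ≤ m)]
      exact Nat.mul_lt_mul_of_pos_left (hmono k (by omega)) (by omega)
    · have hk' : k = m := by omega
      subst hk'
      simp only [hδ, if_pos le_rfl, if_neg (by omega : ¬ k + 1 ≤ k)]
      have hg1 : 1 ≤ (Finset.range k).gcd γ := hgpos k hm (by omega)
      calc N * γ k ≤ (Finset.range k).gcd γ * (N * γ k) := Nat.le_mul_of_pos_left _ hg1
        _ < c := hlt
  · intro i h1 h2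
    by_cases h : i ≤ m
    · rw [key i (by omega), key (i+1) (by omega)]
      exact Nat.mul_lt_mul_of_pos_left (hdec i h1 h) (by omega)
    · have hi' : i = m + 1 := by omega
      subst hi'
      rw [htop, key (m+1) le_rfl, hgcd1]
      omega
  · intro i h1 h2
    by_cases h : i + 1 ≤ m
    · rw [key i (by omega), key (i+1) (by omega)]
      have hd : (N * (Finset.range i).gcd γ) / (N * (Finset.range (i+1)).gcd γ)
          = (Finset.range i).gcd γ / (Finset.range (i+1)).gcd γ :=
        Nat.mul_div_mul_left _ _ (by omega)
      rw [hd]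
      simp only [hδ, if_pos (by omega : i ≤ m), if_pos h]
      calc ((Finset.range i).gcd γ / (Finset.range (i+1)).gcd γ) * (N * γ i)
          = N * (((Finset.range i).gcd γ / (Finset.range (i+1)).gcd γ) * γ i) := by ring
        _ < N * γ (i + 1) := Nat.mul_lt_mul_of_pos_left (hrat i h1 h) (by omega)
    · have hi' : i = m := by omega
      subst hi'
      rw [key i (by omega), key (i+1) le_rfl, hgcd1, mul_one]
      have hd : (N * (Finset.range i).gcd γ) / N = (Finset.range i).gcd γ :=
        Nat.mul_div_cancel_left _ (by omega)
      rw [hd]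
      simp only [hδ, if_pos le_rfl, if_neg (by omega : ¬ i + 1 ≤ i)]
      exact hlt
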